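/- For the additive Gaussian channel X_t = X₀ + √t Z with Z ~ N(0,1) independent of X₀, de Bruijn's identity holds: d/dt h(X_t) = (1/2) J(X_t), where h is differential entropy and J is Fisher information. -/

import Mathlib

set_option maxHeartbeats 1000000
open MeasureTheory ProbabilityTheory Real

namespace DeBruijnAux


/-- centered Gaussian kernel with variance `s`. -/
noncomputable def g (s u : ℝ) : ℝ := (Real.sqrt (2*π*s))⁻¹ * Real.exp (-u^2/(2*s))

lemma g_pos {s : ℝ} (hs : 0 < s) (u : ℝ) : 0 < g s u := by
  have : 0 < Real.sqrt (2*π*s) := Real.sqrt_pos.mpr (by positivity)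
  unfold g; positivity

lemma g_cont (s : ℝ) : Continuous (fun u => g s u) := by
  unfold g; fun_prop

lemma g_upper {σ₀ σ₁ s : ℝ} (h0 : 0 < σ₀) (h1 : σ₀ ≤ s) (h2 : s ≤ σ₁) (u : ℝ) :
    g s u ≤ (Real.sqrt (2*π*σ₀))⁻¹ * Real.exp (-u^2/(2*σ₁)) := by
  have hs : 0 < s := lt_of_lt_of_le h0 h1
  have h₁ : (Real.sqrt (2*π*s))⁻¹ ≤ (Real.sqrt (2*π*σ₀))⁻¹ := by
    apply inv_anti₀ (Real.sqrt_pos.mpr (by positivity))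
    exact Real.sqrt_le_sqrt (by nlinarith [pi_pos])
  have h₂ : Real.exp (-u^2/(2*s)) ≤ Real.exp (-u^2/(2*σ₁)) := by
    apply Real.exp_le_exp.mpr
    rw [div_le_div_iff₀ (by linarith) (by linarith)]
    nlinarith [sq_nonneg u]
  have := mul_le_mul h₁ h₂ (Real.exp_pos _).le (by positivity)
  exact this

lemma g_lower {σ₀ σ₁ s : ℝ} (h0 : 0 < σ₀) (h1 : σ₀ ≤ s) (h2 : s ≤ σ₁) (u : ℝ) :
    (Real.sqrt (2*π*σ₁))⁻¹ * Real.exp (-u^2/(2*σ₀)) ≤ g s u := by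
  have hs : 0 < s := lt_of_lt_of_le h0 h1
  have h₁ : (Real.sqrt (2*π*σ₁))⁻¹ ≤ (Real.sqrt (2*π*s))⁻¹ := by
    apply inv_anti₀ (Real.sqrt_pos.mpr (by positivity))
    exact Real.sqrt_le_sqrt (by nlinarith [pi_pos])
  have h₂ : Real.exp (-u^2/(2*σ₀)) ≤ Real.exp (-u^2/(2*s)) := by
    apply Real.exp_le_exp.mpr
    rw [div_le_div_iff₀ (by linarith) (by linarith)]
    nlinarith [sq_nonneg u]
  exact mul_le_mul h₁ h₂ (Real.exp_pos _).le (by positivity)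

lemma hasDerivAt_g {s : ℝ} (hs : 0 < s) (u : ℝ) :
    HasDerivAt (fun u => g s u) (-(u/s) * g s u) u := by
  have h : HasDerivAt (fun u : ℝ => -u^2/(2*s)) (-(u/s)) u := by
    have := ((hasDerivAt_pow 2 u).neg).div_const (2*s)
    refine this.congr_deriv ?_
    field_simp; ring
  have := (h.exp).const_mul (Real.sqrt (2*π*s))⁻¹
  refine this.congr_deriv ?_
  unfold g; ring

lemma hasDerivAt_g' {s : ℝ} (hs : 0 < s) (u : ℝ) :
    HasDerivAt (fun u => -(u/s) * g s u) ((u^2/s^2 - 1/s) * g s u) u := by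
  have h1 : HasDerivAt (fun u : ℝ => -(u/s)) (-(1/s)) u := by
    exact ((hasDerivAt_id u).div_const s).neg.congr_deriv (by ring)
  have := h1.mul (hasDerivAt_g hs u)
  refine this.congr_deriv ?_
  have hg := g_pos hs u
  field_simp
  ring

lemma sq_le_exp {β w : ℝ} (hβ : 0 < β) : w^2 ≤ (1/β) * Real.exp (β*w^2) := by
  have h := Real.add_one_le_exp (β*w^2)
  rw [← sub_nonneg]
  have he : (1/β) * Real.exp (β*w^2) - w^2 = (1/β) * (Real.exp (β*w^2) - β*w^2) := by
    field_simp
  rw [he]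
  have h2 : 0 ≤ Real.exp (β*w^2) - β*w^2 := by nlinarith
  positivity

lemma abs_le_exp {β w : ℝ} (hβ : 0 < β) : |w| ≤ (1+1/β) * Real.exp (β*w^2) := by
  have h1 : |w| ≤ 1 + w^2 := by nlinarith [abs_nonneg w, sq_abs w, sq_nonneg (|w|-1)]
  have h2 : w^2 ≤ (1/β) * Real.exp (β*w^2) := sq_le_exp hβ
  have h3 : (1:ℝ) ≤ Real.exp (β*w^2) := by
    rw [Real.one_le_exp_iff]; positivity
  nlinarith [Real.exp_pos (β*w^2)]

/-- exponential splitting: if `1/(2σ₁) = β + 1/(2T)` then `exp(-u²/(2σ₁)) = exp(-βu²)·exp(-u²/(2T))`. -/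
lemma exp_split {σ₁ T β u : ℝ} (h : 1/(2*σ₁) = β + 1/(2*T)) :
    Real.exp (-u^2/(2*σ₁)) = Real.exp (-(β*u^2)) * Real.exp (-u^2/(2*T)) := by
  rw [← Real.exp_add]
  congr 1
  have : -u^2/(2*σ₁) = -u^2 * (1/(2*σ₁)) := by ring
  rw [this, h]
  ring

lemma exp_mul_cancel {β u c : ℝ} : c * Real.exp (β*u^2) * Real.exp (-(β*u^2)) = c := by
  rw [mul_assoc, ← Real.exp_add]; simp

lemma g''_bound {σ₀ σ₁ s T β u : ℝ} (h0 : 0 < σ₀) (h1 : σ₀ ≤ s) (h2 : s ≤ σ₁)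
    (hβ : 0 < β) (hT : 0 < T) (hsplit : 1/(2*σ₁) = β + 1/(2*T)) :
    |(u^2/s^2 - 1/s) * g s u| ≤
      ((Real.sqrt (2*π*σ₀))⁻¹ * (1/(σ₀^2*β) + 1/σ₀) * Real.sqrt (2*π*T)) * g T u := by
  have hs : 0 < s := lt_of_lt_of_le h0 h1
  set A := Real.exp (-(β*u^2)) with hA
  set B := Real.exp (-u^2/(2*T)) with hB
  have hApos : 0 < A := Real.exp_pos _
  have hBpos : 0 < B := Real.exp_pos _
  have hA1 : A ≤ 1 := by
    rw [hA, Real.exp_le_one_iff]; nlinarith [sq_nonneg u]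
  have hu2A : u^2 * A ≤ 1/β := by
    calc u^2 * A ≤ ((1/β) * Real.exp (β*u^2)) * A := by
          apply mul_le_mul_of_nonneg_right (sq_le_exp hβ) hApos.le
      _ = 1/β := exp_mul_cancel
  have hgu : g s u ≤ (Real.sqrt (2*π*σ₀))⁻¹ * (A * B) := by
    have := g_upper h0 h1 h2 u
    rwa [exp_split hsplit, ← hA, ← hB] at this
  have hcoef : |u^2/s^2 - 1/s| ≤ u^2/σ₀^2 + 1/σ₀ := by
    have e1 : u^2/s^2 ≤ u^2/σ₀^2 := by gcongr
    have e2 : 1/s ≤ 1/σ₀ := by gcongr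
    have e3 : (0:ℝ) ≤ u^2/s^2 := by positivity
    have e4 : (0:ℝ) < 1/s := by positivity
    rw [abs_le]; constructor <;> nlinarith
  have hgT : B = Real.sqrt (2*π*T) * g T u := by
    unfold g
    rw [← hB, ← mul_assoc, mul_inv_cancel₀ (by positivity : Real.sqrt (2*π*T) ≠ 0), one_mul]
  have step2 : (u^2/σ₀^2 + 1/σ₀) * A ≤ 1/(σ₀^2*β) + 1/σ₀ := by
    have expand : (u^2/σ₀^2 + 1/σ₀) * A = (u^2 * A)/σ₀^2 + A/σ₀ := by ring
    have i1 : (u^2 * A)/σ₀^2 ≤ (1/β)/σ₀^2 := by gcongr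
    have i2 : A/σ₀ ≤ 1/σ₀ := by gcongr
    have : (1/β)/σ₀^2 = 1/(σ₀^2*β) := by field_simp
    linarith [expand ▸ (add_le_add i1 i2), this ▸ i1]
  rw [abs_mul, abs_of_pos (g_pos hs u)]
  calc |u^2/s^2 - 1/s| * g s u
      ≤ (u^2/σ₀^2 + 1/σ₀) * ((Real.sqrt (2*π*σ₀))⁻¹ * (A * B)) := by
        apply mul_le_mul hcoef hgu (g_pos hs u).le (by positivity)
    _ = ((u^2/σ₀^2 + 1/σ₀) * A) * ((Real.sqrt (2*π*σ₀))⁻¹ * B) := by ring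
    _ ≤ (1/(σ₀^2*β) + 1/σ₀) * ((Real.sqrt (2*π*σ₀))⁻¹ * B) := by
        apply mul_le_mul_of_nonneg_right step2 (by positivity)
    _ = ((Real.sqrt (2*π*σ₀))⁻¹ * (1/(σ₀^2*β) + 1/σ₀) * Real.sqrt (2*π*T)) * g T u := by
        rw [hgT]; ring

lemma g'_bound {σ₀ σ₁ s T β u : ℝ} (h0 : 0 < σ₀) (h1 : σ₀ ≤ s) (h2 : s ≤ σ₁)
    (hβ : 0 < β) (hT : 0 < T) (hsplit : 1/(2*σ₁) = β + 1/(2*T)) :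
    |(-(u/s)) * g s u| ≤
      ((Real.sqrt (2*π*σ₀))⁻¹ * ((1+1/β)/σ₀) * Real.sqrt (2*π*T)) * g T u := by
  have hs : 0 < s := lt_of_lt_of_le h0 h1
  set A := Real.exp (-(β*u^2)) with hA
  set B := Real.exp (-u^2/(2*T)) with hB
  have hApos : 0 < A := Real.exp_pos _
  have hBpos : 0 < B := Real.exp_pos _
  have habsA : |u| * A ≤ 1+1/β := by
    calc |u| * A ≤ ((1+1/β) * Real.exp (β*u^2)) * A := by
          apply mul_le_mul_of_nonneg_right (abs_le_exp hβ) hApos.le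
      _ = 1+1/β := exp_mul_cancel
  have hgu : g s u ≤ (Real.sqrt (2*π*σ₀))⁻¹ * (A * B) := by
    have := g_upper h0 h1 h2 u
    rwa [exp_split hsplit, ← hA, ← hB] at this
  have hcoef : |(-(u/s))| ≤ |u|/σ₀ := by
    rw [abs_neg, abs_div, abs_of_pos hs]
    gcongr
  have hgT : B = Real.sqrt (2*π*T) * g T u := by
    unfold g
    rw [← hB, ← mul_assoc, mul_inv_cancel₀ (by positivity : Real.sqrt (2*π*T) ≠ 0), one_mul]
  rw [abs_mul, abs_of_pos (g_pos hs u)]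
  calc |(-(u/s))| * g s u
      ≤ (|u|/σ₀) * ((Real.sqrt (2*π*σ₀))⁻¹ * (A * B)) := by
        apply mul_le_mul hcoef hgu (g_pos hs u).le (by positivity)
    _ = ((|u| * A)/σ₀) * ((Real.sqrt (2*π*σ₀))⁻¹ * B) := by ring
    _ ≤ ((1+1/β)/σ₀) * ((Real.sqrt (2*π*σ₀))⁻¹ * B) := by
        apply mul_le_mul_of_nonneg_right (by gcongr) (by positivity)
    _ = ((Real.sqrt (2*π*σ₀))⁻¹ * ((1+1/β)/σ₀) * Real.sqrt (2*π*T)) * g T u := by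
        rw [hgT]; ring

lemma g_lower8 {σ₀ σ₁ s T u : ℝ} (h0 : 0 < σ₀) (h1 : σ₀ ≤ s) (h2 : s ≤ σ₁)
    (hT : T = 8*σ₀) :
    ((Real.sqrt (2*π*σ₁))⁻¹ * (Real.sqrt (2*π*T))^8) * (g T u)^8 ≤ g s u := by
  have hTpos : 0 < T := by rw [hT]; linarith
  have hsqT : (0:ℝ) < Real.sqrt (2*π*T) := Real.sqrt_pos.mpr (by positivity)
  have hexp : (Real.exp (-u^2/(2*T)))^8 = Real.exp (-u^2/(2*σ₀)) := by
    rw [← Real.exp_nat_mul]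
    congr 1
    rw [hT]; push_cast; field_simp
  have hg : g T u = (Real.sqrt (2*π*T))⁻¹ * Real.exp (-u^2/(2*T)) := rfl
  calc ((Real.sqrt (2*π*σ₁))⁻¹ * (Real.sqrt (2*π*T))^8) * (g T u)^8
      = (Real.sqrt (2*π*σ₁))⁻¹ *
        ((Real.sqrt (2*π*T) * (Real.sqrt (2*π*T))⁻¹)^8 * (Real.exp (-u^2/(2*T)))^8) := by
        rw [hg, mul_pow, mul_pow]; ring
    _ = (Real.sqrt (2*π*σ₁))⁻¹ * Real.exp (-u^2/(2*σ₀)) := by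
        rw [mul_inv_cancel₀ hsqT.ne', one_pow, one_mul, hexp]
    _ ≤ g s u := g_lower h0 h1 h2 u

lemma g_le {s : ℝ} (hs : 0 < s) (u : ℝ) : g s u ≤ (Real.sqrt (2*π*s))⁻¹ := by
  have h1 : Real.exp (-u^2/(2*s)) ≤ 1 := by
    rw [Real.exp_le_one_iff]
    have h2 : (0:ℝ) ≤ u^2/(2*s) := by positivity
    have : -u^2/(2*s) = -(u^2/(2*s)) := neg_div _ _
    linarith
  calc g s u = (Real.sqrt (2*π*s))⁻¹ * Real.exp (-u^2/(2*s)) := rfl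
    _ ≤ (Real.sqrt (2*π*s))⁻¹ * 1 := by
        apply mul_le_mul_of_nonneg_left h1 (by positivity)
    _ = (Real.sqrt (2*π*s))⁻¹ := mul_one _

/-- global sup bound for the first spatial derivative of the kernel. -/
lemma g'_glob {s : ℝ} (hs : 0 < s) : ∃ C : ℝ, 0 ≤ C ∧ ∀ u, |(-(u/s)) * g s u| ≤ C := by
  have hβ : (0:ℝ) < 1/(4*s) := by positivity
  have hT : (0:ℝ) < 2*s := by linarith
  have hsplit : 1/(2*s) = 1/(4*s) + 1/(2*(2*s)) := by field_simp; ring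
  set C' := (Real.sqrt (2*π*s))⁻¹ * ((1+1/(1/(4*s)))/s) * Real.sqrt (2*π*(2*s)) with hC'
  have hC'0 : 0 ≤ C' := by rw [hC']; positivity
  refine ⟨C' * (Real.sqrt (2*π*(2*s)))⁻¹, by positivity, fun u => ?_⟩
  calc |(-(u/s)) * g s u| ≤ C' * g (2*s) u := g'_bound hs le_rfl le_rfl hβ hT hsplit
    _ ≤ C' * (Real.sqrt (2*π*(2*s)))⁻¹ := by
        apply mul_le_mul_of_nonneg_left (g_le hT u) hC'0

/-- global sup bound for the second spatial derivative of the kernel. -/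
lemma g''_glob {s : ℝ} (hs : 0 < s) : ∃ C : ℝ, 0 ≤ C ∧ ∀ u, |(u^2/s^2 - 1/s) * g s u| ≤ C := by
  have hβ : (0:ℝ) < 1/(4*s) := by positivity
  have hT : (0:ℝ) < 2*s := by linarith
  have hsplit : 1/(2*s) = 1/(4*s) + 1/(2*(2*s)) := by field_simp; ring
  set C' := (Real.sqrt (2*π*s))⁻¹ * (1/(s^2*(1/(4*s))) + 1/s) * Real.sqrt (2*π*(2*s)) with hC'
  have hC'0 : 0 ≤ C' := by rw [hC']; positivity
  refine ⟨C' * (Real.sqrt (2*π*(2*s)))⁻¹, by positivity, fun u => ?_⟩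
  calc |(u^2/s^2 - 1/s) * g s u| ≤ C' * g (2*s) u := g''_bound hs le_rfl le_rfl hβ hT hsplit
    _ ≤ C' * (Real.sqrt (2*π*(2*s)))⁻¹ := by
        apply mul_le_mul_of_nonneg_left (g_le hT u) hC'0

variable {ν : Measure ℝ} [IsProbabilityMeasure ν]

lemma integrable_bdd {f : ℝ → ℝ} (hf : AEStronglyMeasurable f ν) {C : ℝ}
    (h : ∀ x, |f x| ≤ C) : Integrable f ν :=
  Integrable.mono' (integrable_const C) hf (ae_of_all _ (fun x => by simpa using h x))

/-- the density of `X₀ + √s·Z` as an integral of shifted Gaussian kernels. -/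
noncomputable def P (ν : Measure ℝ) (s u : ℝ) : ℝ := ∫ x, g s (u - x) ∂ν

lemma integrable_g_shift {s : ℝ} (hs : 0 < s) (u : ℝ) :
    Integrable (fun x => g s (u - x)) ν := by
  apply integrable_bdd (Continuous.aestronglyMeasurable (by have := g_cont s; fun_prop))
  intro x
  rw [abs_of_pos (g_pos hs _)]
  exact g_le hs _

lemma P_hasDerivAt {s : ℝ} (hs : 0 < s) (u : ℝ) :
    HasDerivAt (fun u => P ν s u) (∫ x, -((u - x)/s) * g s (u - x) ∂ν) u := by
  obtain ⟨C, hC0, hC⟩ := g'_glob hs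
  have h := hasDerivAt_integral_of_dominated_loc_of_deriv_le (μ := ν)
    (F := fun u x => g s (u - x)) (F' := fun u x => -((u - x)/s) * g s (u - x))
    (x₀ := u) (s := Metric.ball u 1) (bound := fun _ => C) (Metric.ball_mem_nhds u one_pos)
    (Filter.Eventually.of_forall (fun u' =>
      Continuous.aestronglyMeasurable (by have := g_cont s; fun_prop)))
    (integrable_g_shift hs u)
    (Continuous.aestronglyMeasurable (by
      have h1 := g_cont s
      have : Continuous (fun x : ℝ => -((u - x)/s) * g s (u - x)) := by fun_prop
      exact this))
    (ae_of_all _ (fun x u' _ => hC _))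
    (integrable_const C)
    (ae_of_all _ (fun x u' _ => ?_))
  · exact h.2
  · have hshift : HasDerivAt (fun u' : ℝ => u' - x) 1 u' := (hasDerivAt_id u').sub_const x
    have := (hasDerivAt_g hs (u' - x)).comp u' hshift
    exact this.congr_deriv (by ring)

lemma P_hasDerivAt2 {s : ℝ} (hs : 0 < s) (u : ℝ) :
    HasDerivAt (fun u => ∫ x, -((u - x)/s) * g s (u - x) ∂ν)
      (∫ x, ((u - x)^2/s^2 - 1/s) * g s (u - x) ∂ν) u := by
  obtain ⟨C, hC0, hC⟩ := g''_glob hs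
  obtain ⟨C₁, hC₁0, hC₁⟩ := g'_glob hs
  have h := hasDerivAt_integral_of_dominated_loc_of_deriv_le (μ := ν)
    (F := fun u x => -((u - x)/s) * g s (u - x))
    (F' := fun u x => ((u - x)^2/s^2 - 1/s) * g s (u - x))
    (x₀ := u) (s := Metric.ball u 1) (bound := fun _ => C) (Metric.ball_mem_nhds u one_pos)
    (Filter.Eventually.of_forall (fun u' =>
      Continuous.aestronglyMeasurable (by have := g_cont s; fun_prop)))
    (integrable_bdd (Continuous.aestronglyMeasurable (by have := g_cont s; fun_prop))
      (fun x => hC₁ _))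
    (Continuous.aestronglyMeasurable (by have := g_cont s; fun_prop))
    (ae_of_all _ (fun x u' _ => hC _))
    (integrable_const C)
    (ae_of_all _ (fun x u' _ => ?_))
  · exact h.2
  · have hshift : HasDerivAt (fun u' : ℝ => u' - x) 1 u' := (hasDerivAt_id u').sub_const x
    have := (hasDerivAt_g' hs (u' - x)).comp u' hshift
    exact this.congr_deriv (by ring)

lemma P_deriv {s : ℝ} (hs : 0 < s) :
    deriv (fun u => P ν s u) = fun u => ∫ x, -((u - x)/s) * g s (u - x) ∂ν :=
  funext fun u => (P_hasDerivAt hs u).deriv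

lemma P_deriv2 {s : ℝ} (hs : 0 < s) (u : ℝ) :
    deriv (deriv (fun u => P ν s u)) u = ∫ x, ((u - x)^2/s^2 - 1/s) * g s (u - x) ∂ν := by
  rw [P_deriv hs]
  exact (P_hasDerivAt2 hs u).deriv

variable {ν : Measure ℝ} [IsProbabilityMeasure ν]

lemma sq_integral_le {f : ℝ → ℝ} (hf : Integrable f ν) (hf2 : Integrable (fun x => f x ^ 2) ν) :
    (∫ x, f x ∂ν)^2 ≤ ∫ x, f x ^ 2 ∂ν := by
  set c := ∫ x, f x ∂ν with hc
  have h0 : 0 ≤ ∫ x, (f x - c)^2 ∂ν := integral_nonneg (fun x => sq_nonneg _)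
  have hexp : ∀ x, (f x - c)^2 = f x^2 - (2*c) * f x + c^2 := fun x => by ring
  have h1 : ∫ x, (f x - c)^2 ∂ν
      = (∫ x, f x^2 ∂ν) - (2*c) * (∫ x, f x ∂ν) + c^2 := by
    simp_rw [hexp]
    have hsub : Integrable (fun x => f x^2 - (2*c) * f x) ν := hf2.sub (hf.const_mul (2*c))
    rw [integral_add hsub (integrable_const _), integral_sub hf2 (hf.const_mul (2*c)),
      MeasureTheory.integral_const_mul, integral_const]
    simp
  nlinarith [h0, h1]

lemma pow8_integral_le {f : ℝ → ℝ} (hmeas : AEStronglyMeasurable f ν)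
    (h0 : ∀ x, 0 ≤ f x) {C : ℝ} (hC : ∀ x, f x ≤ C) :
    (∫ x, f x ∂ν)^8 ≤ ∫ x, (f x)^8 ∂ν := by
  have hC0 : 0 ≤ C := le_trans (h0 0) (hC 0)
  have hint : ∀ n : ℕ, Integrable (fun x => f x ^ n) ν := by
    intro n
    apply Integrable.mono' (integrable_const (C^n)) (hmeas.pow n)
    refine ae_of_all _ (fun x => ?_)
    show ‖f x ^ n‖ ≤ C ^ n
    rw [Real.norm_eq_abs, abs_of_nonneg (pow_nonneg (h0 x) n)]
    exact pow_le_pow_left₀ (h0 x) (hC x) n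
  have i1 : (∫ x, f x ∂ν)^2 ≤ ∫ x, f x^2 ∂ν := sq_integral_le (by simpa using hint 1) (hint 2)
  have i2 : (∫ x, f x^2 ∂ν)^2 ≤ ∫ x, (f x^2)^2 ∂ν := sq_integral_le (hint 2) (by
    convert hint 4 using 2 with x; ring)
  have i4 : (∫ x, f x^4 ∂ν)^2 ≤ ∫ x, (f x^4)^2 ∂ν := sq_integral_le (hint 4) (by
    convert hint 8 using 2 with x; ring)
  have e2 : ∫ x, (f x^2)^2 ∂ν = ∫ x, f x^4 ∂ν := by congr 1 with x; ring
  have e4 : ∫ x, (f x^4)^2 ∂ν = ∫ x, f x^8 ∂ν := by congr 1 with x; ring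
  have n1 : 0 ≤ ∫ x, f x ∂ν := integral_nonneg h0
  have n2 : 0 ≤ ∫ x, f x^2 ∂ν := integral_nonneg (fun x => by positivity)
  have n4 : 0 ≤ ∫ x, f x^4 ∂ν := integral_nonneg (fun x => by positivity)
  calc (∫ x, f x ∂ν)^8 = ((∫ x, f x ∂ν)^2)^4 := by ring
    _ ≤ (∫ x, f x^2 ∂ν)^4 := pow_le_pow_left₀ (by positivity) i1 4
    _ = ((∫ x, f x^2 ∂ν)^2)^2 := by ring
    _ ≤ (∫ x, (f x^2)^2 ∂ν)^2 := pow_le_pow_left₀ (by positivity) i2 2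
    _ = (∫ x, f x^4 ∂ν)^2 := by rw [e2]
    _ ≤ ∫ x, (f x^4)^2 ∂ν := i4
    _ = ∫ x, f x^8 ∂ν := e4

lemma log_abs_bound {p M c q : ℝ} (hp : 0 < p) (hq : 0 < q) (hc : 0 < c)
    (hl : c * q^8 ≤ p) (hu : p ≤ M) :
    |Real.log p| ≤ |Real.log M| + |Real.log c| + 8 * |Real.log q| := by
  have hM : 0 < M := lt_of_lt_of_le hp hu
  have h1 : Real.log p ≤ Real.log M := Real.log_le_log hp hu
  have h2 : Real.log c + 8 * Real.log q ≤ Real.log p := by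
    have : Real.log (c * q^8) = Real.log c + 8 * Real.log q := by
      rw [Real.log_mul hc.ne' (by positivity), Real.log_pow]
      push_cast; ring
    rw [← this]
    exact Real.log_le_log (by positivity) hl
  rw [abs_le]
  constructor
  · have := abs_le.mp (le_refl |Real.log c|)
    nlinarith [neg_abs_le (Real.log c), neg_abs_le (Real.log q), abs_nonneg (Real.log M),
      abs_nonneg (Real.log q)]
  · nlinarith [le_abs_self (Real.log M), abs_nonneg (Real.log c), abs_nonneg (Real.log q)]


variable {ν : Measure ℝ} [IsProbabilityMeasure ν]

lemma P_d2_bound {σ₀ σ₁ s T β : ℝ} (h0 : 0 < σ₀) (h1 : σ₀ ≤ s) (h2 : s ≤ σ₁)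
    (hβ : 0 < β) (hT : 0 < T) (hsplit : 1/(2*σ₁) = β + 1/(2*T)) (u : ℝ) :
    |∫ x, ((u - x)^2/s^2 - 1/s) * g s (u - x) ∂ν| ≤
      ((Real.sqrt (2*π*σ₀))⁻¹ * (1/(σ₀^2*β) + 1/σ₀) * Real.sqrt (2*π*T)) * P ν T u := by
  have hs : 0 < s := lt_of_lt_of_le h0 h1
  obtain ⟨C, hC0, hC⟩ := g''_glob hs
  have hcont : Continuous (fun x : ℝ => ((u - x)^2/s^2 - 1/s) * g s (u - x)) := by
    have := g_cont s; fun_prop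
  have hint0 : Integrable (fun x => ((u - x)^2/s^2 - 1/s) * g s (u - x)) ν :=
    integrable_bdd hcont.aestronglyMeasurable (fun x => hC _)
  have hintgT : Integrable (fun x =>
      ((Real.sqrt (2*π*σ₀))⁻¹ * (1/(σ₀^2*β) + 1/σ₀) * Real.sqrt (2*π*T)) * g T (u - x)) ν :=
    (integrable_g_shift hT u).const_mul _
  calc |∫ x, ((u - x)^2/s^2 - 1/s) * g s (u - x) ∂ν|
      ≤ ∫ x, |((u - x)^2/s^2 - 1/s) * g s (u - x)| ∂ν := by
        have h := norm_integral_le_integral_norm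
          (fun x => ((u - x)^2/s^2 - 1/s) * g s (u - x)) (μ := ν)
        simpa only [Real.norm_eq_abs] using h
    _ ≤ ∫ x, ((Real.sqrt (2*π*σ₀))⁻¹ * (1/(σ₀^2*β) + 1/σ₀) * Real.sqrt (2*π*T)) *
          g T (u - x) ∂ν := by
        apply integral_mono hint0.abs hintgT
        intro x
        exact g''_bound h0 h1 h2 hβ hT hsplit
    _ = ((Real.sqrt (2*π*σ₀))⁻¹ * (1/(σ₀^2*β) + 1/σ₀) * Real.sqrt (2*π*T)) * P ν T u := by
        rw [P, integral_const_mul]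

lemma P_d1_bound {σ₀ σ₁ s T β : ℝ} (h0 : 0 < σ₀) (h1 : σ₀ ≤ s) (h2 : s ≤ σ₁)
    (hβ : 0 < β) (hT : 0 < T) (hsplit : 1/(2*σ₁) = β + 1/(2*T)) (u : ℝ) :
    |∫ x, -((u - x)/s) * g s (u - x) ∂ν| ≤
      ((Real.sqrt (2*π*σ₀))⁻¹ * ((1+1/β)/σ₀) * Real.sqrt (2*π*T)) * P ν T u := by
  have hs : 0 < s := lt_of_lt_of_le h0 h1
  obtain ⟨C, hC0, hC⟩ := g'_glob hs
  have hcont : Continuous (fun x : ℝ => -((u - x)/s) * g s (u - x)) := by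
    have := g_cont s; fun_prop
  have hint0 : Integrable (fun x => -((u - x)/s) * g s (u - x)) ν :=
    integrable_bdd hcont.aestronglyMeasurable (fun x => hC _)
  have hintgT : Integrable (fun x =>
      ((Real.sqrt (2*π*σ₀))⁻¹ * ((1+1/β)/σ₀) * Real.sqrt (2*π*T)) * g T (u - x)) ν :=
    (integrable_g_shift hT u).const_mul _
  calc |∫ x, -((u - x)/s) * g s (u - x) ∂ν|
      ≤ ∫ x, |(-((u - x)/s)) * g s (u - x)| ∂ν := by
        have h := norm_integral_le_integral_norm (fun x => -((u - x)/s) * g s (u - x)) (μ := ν)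
        simpa only [Real.norm_eq_abs] using h
    _ ≤ ∫ x, ((Real.sqrt (2*π*σ₀))⁻¹ * ((1+1/β)/σ₀) * Real.sqrt (2*π*T)) * g T (u - x) ∂ν := by
        apply integral_mono hint0.abs hintgT
        intro x
        exact g'_bound h0 h1 h2 hβ hT hsplit
    _ = ((Real.sqrt (2*π*σ₀))⁻¹ * ((1+1/β)/σ₀) * Real.sqrt (2*π*T)) * P ν T u := by
        rw [P, integral_const_mul]

lemma P_lower8 {σ₀ σ₁ s T : ℝ} (h0 : 0 < σ₀) (h1 : σ₀ ≤ s) (h2 : s ≤ σ₁)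
    (hT8 : T = 8*σ₀) (u : ℝ) :
    ((Real.sqrt (2*π*σ₁))⁻¹ * (Real.sqrt (2*π*T))^8) * (P ν T u)^8 ≤ P ν s u := by
  have hs : 0 < s := lt_of_lt_of_le h0 h1
  have hT : 0 < T := by rw [hT8]; linarith
  have hc₁0 : 0 ≤ (Real.sqrt (2*π*σ₁))⁻¹ * (Real.sqrt (2*π*T))^8 := by positivity
  have hcont : Continuous (fun x : ℝ => (g T (u - x))^8) := by
    have := g_cont T; fun_prop
  have hint8 : Integrable (fun x => (g T (u - x))^8) ν := by
    apply integrable_bdd hcont.aestronglyMeasurable (C := ((Real.sqrt (2*π*T))⁻¹)^8)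
    intro x
    rw [abs_of_nonneg (pow_nonneg (g_pos hT _).le 8)]
    exact pow_le_pow_left₀ (g_pos hT _).le (g_le hT _) 8
  have hpow : (P ν T u)^8 ≤ ∫ x, (g T (u - x))^8 ∂ν := by
    apply pow8_integral_le (Continuous.aestronglyMeasurable (by have := g_cont T; fun_prop))
      (fun x => (g_pos hT _).le) (C := (Real.sqrt (2*π*T))⁻¹) (fun x => g_le hT _)
  calc ((Real.sqrt (2*π*σ₁))⁻¹ * (Real.sqrt (2*π*T))^8) * (P ν T u)^8
      ≤ ((Real.sqrt (2*π*σ₁))⁻¹ * (Real.sqrt (2*π*T))^8) * ∫ x, (g T (u - x))^8 ∂ν := by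
        apply mul_le_mul_of_nonneg_left hpow hc₁0
    _ = ∫ x, ((Real.sqrt (2*π*σ₁))⁻¹ * (Real.sqrt (2*π*T))^8) * (g T (u - x))^8 ∂ν := by
        rw [integral_const_mul]
    _ ≤ ∫ x, g s (u - x) ∂ν := by
        apply integral_mono (hint8.const_mul _) (integrable_g_shift hs u)
        intro x
        exact g_lower8 h0 h1 h2 hT8
    _ = P ν s u := rfl

lemma P_upper {σ₀ σ₁ s : ℝ} (h0 : 0 < σ₀) (h1 : σ₀ ≤ s) (h2 : s ≤ σ₁) (u : ℝ) :
    P ν s u ≤ (Real.sqrt (2*π*σ₀))⁻¹ := by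
  have hs : 0 < s := lt_of_lt_of_le h0 h1
  have hle : ∀ x : ℝ, g s (u - x) ≤ (Real.sqrt (2*π*σ₀))⁻¹ := by
    intro x
    refine (g_le hs _).trans ?_
    apply inv_anti₀ (Real.sqrt_pos.mpr (by positivity))
    exact Real.sqrt_le_sqrt (by nlinarith [pi_pos])
  calc P ν s u ≤ ∫ _, (Real.sqrt (2*π*σ₀))⁻¹ ∂ν :=
        integral_mono (integrable_g_shift hs u) (integrable_const _) hle
    _ = (Real.sqrt (2*π*σ₀))⁻¹ := by simp
lemma P_cont {ν : Measure ℝ} [IsProbabilityMeasure ν] {s : ℝ} (hs : 0 < s) :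
    Continuous (fun u => P ν s u) :=
  continuous_iff_continuousAt.mpr (fun u => (P_hasDerivAt hs u).continuousAt)

lemma P_nonneg {ν : Measure ℝ} [IsProbabilityMeasure ν] {s : ℝ} (hs : 0 < s) (u : ℝ) :
    0 ≤ P ν s u :=
  integral_nonneg (fun x => (g_pos hs _).le)

/-- Representation of the density of `X₀ + √s Z` as a Gaussian mixture. -/
lemma rep {Ω : Type*} [MeasureSpace Ω] (μ : Measure Ω) [IsProbabilityMeasure μ]
    (X₀ Z : Ω → ℝ) (hX₀ : Measurable X₀) (hZ : Measurable Z)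
    (hZ_gauss : μ.map Z = gaussianReal 0 1)
    (h_indep : IndepFun X₀ Z μ)
    {s : ℝ} (hs : 0 < s) (ps : ℝ → ℝ) (hps_cont : Continuous ps)
    (hps_nonneg : ∀ u, 0 ≤ ps u)
    (hdens : μ.map (fun ω => X₀ ω + Real.sqrt s * Z ω) =
      volume.withDensity (fun u => ENNReal.ofReal (ps u))) :
    ps = fun u => P (μ.map X₀) s u := by
  set ν := μ.map X₀ with hν
  have hνprob : IsProbabilityMeasure ν := Measure.isProbabilityMeasure_map hX₀.aemeasurable
  have hprod : μ.map (fun ω => (X₀ ω, Z ω)) = ν.prod (gaussianReal 0 1) := by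
    rw [hν, ← hZ_gauss]
    exact (indepFun_iff_map_prod_eq_prod_map_map hX₀.aemeasurable hZ.aemeasurable).mp h_indep
  have hsum : μ.map (fun ω => X₀ ω + Real.sqrt s * Z ω)
      = (ν.prod (gaussianReal 0 1)).map (fun q : ℝ × ℝ => q.1 + Real.sqrt s * q.2) := by
    rw [← hprod, Measure.map_map (by fun_prop) (hX₀.prodMk hZ)]
    rfl
  have hvs : ((⟨s, hs.le⟩ : NNReal) : ℝ) = s := rfl
  have hvs0 : (⟨s, hs.le⟩ : NNReal) ≠ 0 := by
    intro h
    apply hs.ne'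
    exact congrArg (fun x : NNReal => (x : ℝ)) h
  have hslice : ∀ x : ℝ, (gaussianReal 0 1).map (fun z => x + Real.sqrt s * z)
      = gaussianReal x ⟨s, hs.le⟩ := by
    intro x
    have h1 : (gaussianReal 0 1).map (fun z : ℝ => Real.sqrt s * z)
        = gaussianReal 0 ⟨s, hs.le⟩ := by
      have h := gaussianReal_map_const_mul (μ := 0) (v := 1) (Real.sqrt s)
      have h2 : (fun z : ℝ => Real.sqrt s * z) = (Real.sqrt s * ·) := rfl
      rw [h2, h]
      congr 1
      · ring
      · ext
        simp [Real.sq_sqrt hs.le]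
        rfl
    have h2 : (fun z : ℝ => x + Real.sqrt s * z)
        = (· + x) ∘ (fun z : ℝ => Real.sqrt s * z) := by
      funext z; simp [add_comm]
    rw [h2, ← Measure.map_map (measurable_id'.add_const x) (measurable_const_mul _), h1]
    exact (gaussianReal_map_add_const (μ := 0) (v := ⟨s, hs.le⟩) x).trans
      (congrArg₂ gaussianReal (zero_add x) rfl)
  have hgr : ∀ x : ℝ, gaussianReal x ⟨s, hs.le⟩
      = volume.withDensity (fun u => ENNReal.ofReal (g s (u - x))) := by
    intro x
    rw [gaussianReal_of_var_ne_zero _ hvs0]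
    congr 1
  have hmeasK : Measurable (fun q : ℝ × ℝ => ENNReal.ofReal (g s (q.2 - q.1))) := by
    apply Measurable.ennreal_ofReal
    have := g_cont s
    fun_prop
  have hmain : (ν.prod (gaussianReal 0 1)).map (fun q : ℝ × ℝ => q.1 + Real.sqrt s * q.2)
      = volume.withDensity (fun u => ∫⁻ x, ENNReal.ofReal (g s (u - x)) ∂ν) := by
    ext A hA
    rw [Measure.map_apply (by fun_prop) hA,
      Measure.prod_apply (hA.preimage (by fun_prop)),
      withDensity_apply _ hA]
    have hrw : ∀ x : ℝ, (gaussianReal 0 1) (Prod.mk x ⁻¹' ((fun q : ℝ × ℝ => q.1 + Real.sqrt s * q.2) ⁻¹' A))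
        = ∫⁻ u in A, ENNReal.ofReal (g s (u - x)) ∂volume := by
      intro x
      have hpre : Prod.mk x ⁻¹' ((fun q : ℝ × ℝ => q.1 + Real.sqrt s * q.2) ⁻¹' A)
          = (fun z => x + Real.sqrt s * z) ⁻¹' A := rfl
      rw [hpre, ← Measure.map_apply (by fun_prop) hA, hslice x, hgr x,
        withDensity_apply _ hA]
    simp_rw [hrw]
    exact lintegral_lintegral_swap (μ := ν) (ν := volume.restrict A)
      (f := fun x u => ENNReal.ofReal (g s (u - x))) hmeasK.aemeasurable
  -- now identify the densities
  have hwd : volume.withDensity (fun u => ENNReal.ofReal (ps u))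
      = volume.withDensity (fun u => ∫⁻ x, ENNReal.ofReal (g s (u - x)) ∂ν) := by
    rw [← hdens, hsum, hmain]
  have hmeasK2 : Measurable (fun q : ℝ × ℝ => ENNReal.ofReal (g s (q.1 - q.2))) := by
    apply Measurable.ennreal_ofReal
    have := g_cont s
    fun_prop
  have hmeas2 : Measurable (fun u => ∫⁻ x, ENNReal.ofReal (g s (u - x)) ∂ν) :=
    Measurable.lintegral_prod_right (f := fun u x => ENNReal.ofReal (g s (u - x))) hmeasK2
  have hprob2 : IsProbabilityMeasure (volume.withDensity (fun u => ENNReal.ofReal (ps u))) := by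
    rw [← hdens]
    exact Measure.isProbabilityMeasure_map (by fun_prop)
  have hfin : ∫⁻ u, ENNReal.ofReal (ps u) ∂volume ≠ ⊤ := by
    have : (volume.withDensity (fun u => ENNReal.ofReal (ps u))) Set.univ = 1 :=
      hprob2.measure_univ
    rw [withDensity_apply _ MeasurableSet.univ, setLIntegral_univ] at this
    rw [this]
    exact ENNReal.one_ne_top
  have hae : (fun u => ENNReal.ofReal (ps u))
      =ᵐ[volume] (fun u => ∫⁻ x, ENNReal.ofReal (g s (u - x)) ∂ν) :=
    (withDensity_eq_iff (by fun_prop) hmeas2.aemeasurable hfin).mp hwd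
  have hlp : ∀ u, ∫⁻ x, ENNReal.ofReal (g s (u - x)) ∂ν = ENNReal.ofReal (P ν s u) := by
    intro u
    rw [P, ← ofReal_integral_eq_lintegral_ofReal (integrable_g_shift hs u)
      (ae_of_all _ (fun x => (g_pos hs _).le))]
  have hae2 : ps =ᵐ[volume] (fun u => P ν s u) := by
    filter_upwards [hae] with u hu
    rw [hlp u] at hu
    exact (ENNReal.ofReal_eq_ofReal_iff (hps_nonneg u) (P_nonneg hs u)).mp hu
  exact (hps_cont.ae_eq_iff_eq volume (P_cont hs)).mp hae2


end DeBruijnAux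

open DeBruijnAux

/-- De Bruijn's identity for the additive Gaussian channel `X_t = X₀ + √t Z`,
`Z ~ N(0,1)` independent of `X₀`: if `p t` is the (smooth, positive) density of
`X_t`, solving the heat equation `∂_t p = (1/2) ∂²_x p`, then
`d/dt h(X_t) = (1/2) J(X_t)` for every `t > 0`, where
`h(X_t) = −∫ p_t log p_t` and `J(X_t) = ∫ (∂_x p_t)²/p_t`. -/
theorem stmt6 {Ω : Type*} [MeasureSpace Ω] (μ : Measure Ω) [IsProbabilityMeasure μ]
    (X₀ Z : Ω → ℝ) (hX₀ : Measurable X₀) (hZ : Measurable Z)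
    (hZ_gauss : μ.map Z = gaussianReal 0 1)
    (h_indep : IndepFun X₀ Z μ)
    (p : ℝ → ℝ → ℝ)
    (hp_density : ∀ t : ℝ, 0 < t →
      μ.map (fun ω => X₀ ω + Real.sqrt t * Z ω) =
        volume.withDensity (fun x => ENNReal.ofReal (p t x)))
    (hp_smooth : ContDiff ℝ (⊤ : ℕ∞) (fun q : ℝ × ℝ => p q.1 q.2))
    (hp_pos : ∀ t x, 0 < t → 0 < p t x)
    (h_heat : ∀ t x, 0 < t →
      HasDerivAt (fun t => p t x) ((1 / 2) * iteratedDeriv 2 (fun x => p t x) x) t)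
    (h_ent_int : ∀ t : ℝ, 0 < t → Integrable (fun x => p t x * Real.log (p t x)))
    (h_fisher_int : ∀ t : ℝ, 0 < t →
      Integrable (fun x => (deriv (fun x => p t x) x) ^ 2 / p t x)) :
    ∀ t : ℝ, 0 < t →
      HasDerivAt (fun t => -∫ x, p t x * Real.log (p t x))
        ((1 / 2) * ∫ x, (deriv (fun x => p t x) x) ^ 2 / p t x) t := by
  intro t ht
  set ν := μ.map X₀ with hνdef
  haveI hνprob : IsProbabilityMeasure ν := Measure.isProbabilityMeasure_map hX₀.aemeasurable
  -- continuity of slices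
  have hpc : ∀ s : ℝ, Continuous (fun u => p s u) := fun s =>
    (hp_smooth.continuous).comp (Continuous.prodMk_right s)
  have hrep : ∀ s, 0 < s → (fun u => p s u) = fun u => P ν s u := fun s hs =>
    rep μ X₀ Z hX₀ hZ hZ_gauss h_indep hs (fun u => p s u) (hpc s)
      (fun u => (hp_pos s u hs).le) (hp_density s hs)
  have hpP : ∀ s, 0 < s → ∀ u, p s u = P ν s u := fun s hs u => congrFun (hrep s hs) u
  -- window constants
  set σ₀ := 3*t/4 with hσ₀def
  set σ₁ := 5*t/4 with hσ₁def
  set T := 6*t with hTdef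
  set β := 1/(2*σ₁) - 1/(2*T) with hβdef
  have hσ₀pos : 0 < σ₀ := by rw [hσ₀def]; linarith
  have hσ₁pos : 0 < σ₁ := by rw [hσ₁def]; linarith
  have hTpos : 0 < T := by rw [hTdef]; linarith
  have hβ : 0 < β := by
    rw [hβdef, hσ₁def, hTdef, sub_pos]
    apply one_div_lt_one_div_of_lt (by linarith)
    linarith
  have hsplit : 1/(2*σ₁) = β + 1/(2*T) := by rw [hβdef]; ring
  have hT8 : T = 8*σ₀ := by rw [hTdef, hσ₀def]; ring
  have htw1 : σ₀ ≤ t := by rw [hσ₀def]; linarith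
  have htw2 : t ≤ σ₁ := by rw [hσ₁def]; linarith
  have hball : ∀ s ∈ Metric.ball t (t/4), σ₀ ≤ s ∧ s ≤ σ₁ ∧ 0 < s := by
    intro s hs
    rw [Metric.mem_ball, Real.dist_eq] at hs
    have h := abs_lt.mp hs
    refine ⟨by rw [hσ₀def]; linarith [h.1], by rw [hσ₁def]; linarith [h.2], ?_⟩
    rw [hσ₀def] at *; linarith [h.1]
  set C₂ := (Real.sqrt (2*π*σ₀))⁻¹ * (1/(σ₀^2*β) + 1/σ₀) * Real.sqrt (2*π*T) with hC₂def
  set C₁ := (Real.sqrt (2*π*σ₀))⁻¹ * ((1+1/β)/σ₀) * Real.sqrt (2*π*T) with hC₁def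
  set c₁ := (Real.sqrt (2*π*σ₁))⁻¹ * (Real.sqrt (2*π*T))^8 with hc₁def
  set M := (Real.sqrt (2*π*σ₀))⁻¹ with hMdef
  have hc₁pos : 0 < c₁ := by rw [hc₁def]; positivity
  have hC₂0 : 0 ≤ C₂ := by
    rw [hC₂def]
    have h1 : 0 < 1/(σ₀^2*β) := by
      apply one_div_pos.mpr
      exact mul_pos (by positivity) hβ
    have h2 : 0 < 1/σ₀ := by positivity
    positivity
  have hC₁0 : 0 ≤ C₁ := by
    rw [hC₁def]
    have h1 : 0 < 1+1/β := by
      have : 0 < 1/β := by positivity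
      linarith
    positivity
  -- derivative identities
  have hDeriv1 : ∀ s, 0 < s →
      deriv (fun x => p s x) = fun u => ∫ x, -((u - x)/s) * g s (u - x) ∂ν := by
    intro s hs
    rw [hrep s hs]
    exact P_deriv hs
  have hDeriv2 : ∀ s, 0 < s → ∀ u,
      iteratedDeriv 2 (fun x => p s x) u = ∫ x, ((u - x)^2/s^2 - 1/s) * g s (u - x) ∂ν := by
    intro s hs u
    rw [show (2:ℕ) = 1 + 1 from rfl, iteratedDeriv_succ, iteratedDeriv_one]
    rw [hrep s hs]
    exact P_deriv2 hs u
  -- log bound on the window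
  have hlog : ∀ s, σ₀ ≤ s → s ≤ σ₁ → ∀ u,
      |Real.log (p s u)| ≤ |Real.log M| + |Real.log c₁| + 8 * |Real.log (p T u)| := by
    intro s h1 h2 u
    have hs : 0 < s := lt_of_lt_of_le hσ₀pos h1
    apply log_abs_bound (hp_pos s u hs) (hp_pos T u hTpos) hc₁pos
    · rw [hpP s hs u, hpP T hTpos u, hc₁def]
      exact P_lower8 hσ₀pos h1 h2 hT8 u
    · rw [hpP s hs u, hMdef]
      exact P_upper hσ₀pos h1 h2 u
  -- integrability at time T
  have hpT_int : Integrable (fun u => p T u) volume := by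
    have hprob3 : IsProbabilityMeasure (volume.withDensity fun u => ENNReal.ofReal (p T u)) := by
      rw [← hp_density T hTpos]
      exact Measure.isProbabilityMeasure_map (by fun_prop)
    have h1 : ∫⁻ u, ENNReal.ofReal (p T u) = 1 := by
      have h2 := hprob3.measure_univ
      rwa [withDensity_apply _ MeasurableSet.univ, setLIntegral_univ] at h2
    refine ⟨(hpc T).aestronglyMeasurable, ?_⟩
    rw [hasFiniteIntegral_iff_ofReal (ae_of_all _ fun u => (hp_pos T u hTpos).le), h1]
    exact ENNReal.one_lt_top
  have habs_T : Integrable (fun u => p T u * |Real.log (p T u)|) volume := by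
    have h := (h_ent_int T hTpos).abs
    have he : (fun x => |p T x * Real.log (p T x)|) = fun u => p T u * |Real.log (p T u)| := by
      funext u; rw [abs_mul, abs_of_pos (hp_pos T u hTpos)]
    rwa [he] at h
  -- the dominated-derivative argument
  set bound := fun u => (1/2) * (C₂ * p T u) *
    ((|Real.log M| + |Real.log c₁| + 8 * |Real.log (p T u)|) + 1) with hbounddef
  have hbound_int : Integrable bound volume := by
    have hb : bound = fun u => ((1/2) * C₂ * (|Real.log M| + |Real.log c₁| + 1)) * p T u
        + (4 * C₂) * (p T u * |Real.log (p T u)|) := by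
      funext u; rw [hbounddef]; ring
    rw [hb]
    exact (hpT_int.const_mul _).add (habs_T.const_mul _)
  have hd2_bound : ∀ s, σ₀ ≤ s → s ≤ σ₁ → ∀ u,
      |iteratedDeriv 2 (fun x => p s x) u| ≤ C₂ * p T u := by
    intro s h1 h2 u
    have hs : 0 < s := lt_of_lt_of_le hσ₀pos h1
    rw [hDeriv2 s hs u, hpP T hTpos u, hC₂def]
    exact P_d2_bound hσ₀pos h1 h2 hβ hTpos hsplit u
  have hd1_bound : ∀ s, σ₀ ≤ s → s ≤ σ₁ → ∀ u,
      |deriv (fun x => p s x) u| ≤ C₁ * p T u := by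
    intro s h1 h2 u
    have hs : 0 < s := lt_of_lt_of_le hσ₀pos h1
    rw [hDeriv1 s hs, hpP T hTpos u, hC₁def]
    exact P_d1_bound hσ₀pos h1 h2 hβ hTpos hsplit u
  -- smoothness facts at time t
  have hq : ContDiff ℝ (⊤ : ℕ∞) (fun y => p t y) :=
    (hp_smooth.of_le (by simp)).comp (contDiff_const.prodMk contDiff_id)
  have hqd : ContDiff ℝ (⊤ : ℕ∞) (deriv (fun y => p t y)) := (contDiff_infty_iff_deriv.mp hq).2
  have hitd2cont : Continuous (iteratedDeriv 2 (fun x => p t x)) := by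
    rw [show (2:ℕ) = 1 + 1 from rfl, iteratedDeriv_succ, iteratedDeriv_one]
    exact ((contDiff_infty_iff_deriv.mp hqd).2).continuous
  have hF'meas : AEStronglyMeasurable
      (fun x => ((1/2) * iteratedDeriv 2 (fun y => p t y) x) * (Real.log (p t x) + 1))
      volume := by
    apply Measurable.aestronglyMeasurable
    exact ((hitd2cont.measurable).const_mul (1/2)).mul
      ((Real.measurable_log.comp (hpc t).measurable).add_const 1)
  have hder := hasDerivAt_integral_of_dominated_loc_of_deriv_le (μ := volume)
    (F := fun s x => p s x * Real.log (p s x))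
    (F' := fun s x => ((1/2) * iteratedDeriv 2 (fun y => p s y) x) * (Real.log (p s x) + 1))
    (x₀ := t) (s := Metric.ball t (t/4)) (bound := bound) (Metric.ball_mem_nhds t (by positivity))
    (Filter.Eventually.of_forall fun s =>
      ((hpc s).measurable.mul (Real.measurable_log.comp (hpc s).measurable)).aestronglyMeasurable)
    (h_ent_int t ht) hF'meas
    (ae_of_all _ (fun x s hs => ?_)) hbound_int
    (ae_of_all _ (fun x s hs => ?_))
  rotate_left
  · -- the bound
    obtain ⟨h1, h2, h3⟩ := hball s hs
    rw [Real.norm_eq_abs, abs_mul, abs_mul, abs_of_nonneg (by norm_num : (0:ℝ) ≤ 1/2)]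
    have e2 : |iteratedDeriv 2 (fun y => p s y) x| ≤ C₂ * p T x := hd2_bound s h1 h2 x
    have e3 : |Real.log (p s x) + 1| ≤
        (|Real.log M| + |Real.log c₁| + 8 * |Real.log (p T x)|) + 1 := by
      refine (abs_add_le _ _).trans ?_
      have := hlog s h1 h2 x
      simp only [abs_one]
      linarith
    rw [hbounddef]
    have hC2pT : 0 ≤ C₂ * p T x := mul_nonneg hC₂0 (hp_pos T x hTpos).le
    calc (1/2) * |iteratedDeriv 2 (fun y => p s y) x| * |Real.log (p s x) + 1|
        ≤ (1/2) * (C₂ * p T x) * ((|Real.log M| + |Real.log c₁| + 8 * |Real.log (p T x)|) + 1) := by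
          apply mul_le_mul (by linarith [e2] : (1/2) * |iteratedDeriv 2 (fun y => p s y) x| ≤ (1/2) * (C₂ * p T x)) e3 (abs_nonneg _) (by positivity)
      _ = _ := rfl
  · -- differentiability in s
    obtain ⟨h1, h2, h3⟩ := hball s hs
    have hp := h_heat s x h3
    have hL : HasDerivAt (fun y : ℝ => y * Real.log y) (Real.log (p s x) + 1) (p s x) := by
      have := (hasDerivAt_id (p s x)).mul (Real.hasDerivAt_log (hp_pos s x h3).ne')
      refine this.congr_deriv ?_
      rw [one_mul, id_eq, mul_inv_cancel₀ (hp_pos s x h3).ne']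
    have := hL.comp s hp
    refine this.congr_deriv ?_
    ring
  -- hder : Integrable F'(t) ∧ HasDerivAt ...
  obtain ⟨hF'int, hderiv⟩ := hder
  -- FTC/integration-by-parts part
  have hdiff_pt : Differentiable ℝ (fun y => p t y) := hq.differentiable (by simp)
  have hdiff_pt' : Differentiable ℝ (deriv (fun y => p t y)) := hqd.differentiable (by simp)
  have hD2 : ∀ u, HasDerivAt (deriv (fun y => p t y))
      (iteratedDeriv 2 (fun y => p t y) u) u := by
    intro u
    rw [show (2:ℕ) = 1 + 1 from rfl, iteratedDeriv_succ, iteratedDeriv_one]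
    exact (hdiff_pt' u).hasDerivAt
  have hG : ∀ u, HasDerivAt (fun y => deriv (fun z => p t z) y * (Real.log (p t y) + 1))
      (iteratedDeriv 2 (fun y => p t y) u * (Real.log (p t u) + 1)
        + (deriv (fun y => p t y) u)^2 / p t u) u := by
    intro u
    have hlogd : HasDerivAt (fun y => Real.log (p t y) + 1)
        (deriv (fun y => p t y) u / p t u) u := by
      have h1 : HasDerivAt (fun y => p t y) (deriv (fun y => p t y) u) u :=
        (hdiff_pt u).hasDerivAt
      have h2 := (Real.hasDerivAt_log (hp_pos t u ht).ne').comp u h1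
      have h3 := h2.add_const 1
      refine h3.congr_deriv ?_
      rw [div_eq_inv_mul]
    have := (hD2 u).mul hlogd
    refine this.congr_deriv ?_
    ring
  have hGmeas : AEStronglyMeasurable
      (fun u => deriv (fun z => p t z) u * (Real.log (p t u) + 1)) volume := by
    apply Measurable.aestronglyMeasurable
    exact (hqd.continuous.measurable).mul
      ((Real.measurable_log.comp (hpc t).measurable).add_const 1)
  have hGint : Integrable (fun u => deriv (fun z => p t z) u * (Real.log (p t u) + 1)) volume := by
    have hmaj : Integrable (fun u => C₁ * p T u *
        ((|Real.log M| + |Real.log c₁| + 8 * |Real.log (p T u)|) + 1)) volume := by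
      have hb : (fun u => C₁ * p T u *
          ((|Real.log M| + |Real.log c₁| + 8 * |Real.log (p T u)|) + 1))
          = fun u => (C₁ * (|Real.log M| + |Real.log c₁| + 1)) * p T u
            + (8 * C₁) * (p T u * |Real.log (p T u)|) := by
        funext u; ring
      rw [hb]
      exact (hpT_int.const_mul _).add (habs_T.const_mul _)
    apply Integrable.mono' hmaj hGmeas
    refine ae_of_all _ (fun u => ?_)
    rw [Real.norm_eq_abs, abs_mul]
    have e1 : |deriv (fun z => p t z) u| ≤ C₁ * p T u := hd1_bound t htw1 htw2 u
    have e3 : |Real.log (p t u) + 1| ≤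
        (|Real.log M| + |Real.log c₁| + 8 * |Real.log (p T u)|) + 1 := by
      refine (abs_add_le _ _).trans ?_
      have := hlog t htw1 htw2 u
      simp only [abs_one]
      linarith
    apply mul_le_mul e1 e3 (abs_nonneg _) (mul_nonneg hC₁0 (hp_pos T u hTpos).le)
  have hG'eq : (fun u => iteratedDeriv 2 (fun y => p t y) u * (Real.log (p t u) + 1)
        + (deriv (fun y => p t y) u)^2 / p t u)
      = fun u => 2 * (((1/2) * iteratedDeriv 2 (fun y => p t y) u) * (Real.log (p t u) + 1))
        + (deriv (fun y => p t y) u)^2 / p t u := by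
    funext u; ring
  have hG'int : Integrable (fun u => iteratedDeriv 2 (fun y => p t y) u * (Real.log (p t u) + 1)
      + (deriv (fun y => p t y) u)^2 / p t u) volume := by
    rw [hG'eq]
    exact (hF'int.const_mul 2).add (h_fisher_int t ht)
  have hzero : ∫ u, (iteratedDeriv 2 (fun y => p t y) u * (Real.log (p t u) + 1)
      + (deriv (fun y => p t y) u)^2 / p t u) = 0 :=
    integral_eq_zero_of_hasDerivAt_of_integrable hG hG'int hGint
  have hsplit_int : ∫ u, (iteratedDeriv 2 (fun y => p t y) u * (Real.log (p t u) + 1)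
      + (deriv (fun y => p t y) u)^2 / p t u)
      = 2 * (∫ u, ((1/2) * iteratedDeriv 2 (fun y => p t y) u) * (Real.log (p t u) + 1))
        + ∫ u, (deriv (fun y => p t y) u)^2 / p t u := by
    rw [hG'eq, integral_add (hF'int.const_mul 2) (h_fisher_int t ht), integral_const_mul]
  have hval : ∫ x, ((1/2) * iteratedDeriv 2 (fun y => p t y) x) * (Real.log (p t x) + 1)
      = -(1/2) * ∫ x, (deriv (fun x => p t x) x)^2 / p t x := by
    rw [hsplit_int] at hzero
    linarith
  rw [hval] at hderiv
  have hfinal := hderiv.neg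
  refine hfinal.congr_deriv ?_
  ring
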